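/- arXiv:2112.02502 — 7 statements merged into one kernel-verified Lean document; each statement's English description precedes it below -/
import Mathlib

section
/- For an n-vertex graph G with adjacency matrix A and bitstrings h, g, k, l ∈ {0,1}^n, the matrix element ⟨h| X^k Z^l |g⟩ between graph basis states equals (-1)^{h·k + σ(A,k)} if A·k + l = h + g (over Z_2), and equals 0 otherwise. -/
open Finset

/-- The `n`-qubit state space, written as amplitude functions on computational basis
labels `{0,1}^n`. -/
abbrev QState (n : ℕ) := (Fin n → ZMod 2) → ℂ

/-- The Pauli operator `Z^h = ⊗_i Z_i^{h_i}`, acting diagonally. -/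
noncomputable def pauliZ {n : ℕ} (h : Fin n → ZMod 2) (ψ : QState n) : QState n :=
  fun x => (-1 : ℂ) ^ (∑ i, (h i * x i).val) * ψ x

/-- The Pauli operator `X^k = ⊗_i X_i^{k_i}`, acting by bit flips. -/
def pauliX {n : ℕ} (k : Fin n → ZMod 2) (ψ : QState n) : QState n :=
  fun x => ψ (x + k)

/-- `σ(A,k) = Σ_{j} k_j (Σ_{i<j} k_i A_{ij})` (as a natural number; only its parity
matters in `(-1)^σ`). -/
def sigmaA {n : ℕ} (A : Matrix (Fin n) (Fin n) (ZMod 2)) (k : Fin n → ZMod 2) : ℕ :=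
  ∑ j, ∑ i ∈ univ.filter (· < j), (k j * k i * A i j).val

/-- The graph state `|G⟩ = Π_{(i,j)∈E} CZ(i,j) H^{⊗n} |0^n⟩` of the graph with
adjacency matrix `A`: each `CZ(i,j)` for an edge `i < j` contributes the phase
`(-1)^{A_{ij} x_i x_j}` on the uniform superposition `H^{⊗n}|0^n⟩`. -/
noncomputable def graphState {n : ℕ} (A : Matrix (Fin n) (Fin n) (ZMod 2)) : QState n :=
  fun x => (∏ j, ∏ i ∈ univ.filter (· < j), (-1 : ℂ) ^ ((A i j * x i * x j).val))
    * (1 / Real.sqrt (2 ^ n))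


/-- The inner product `⟨φ|ψ⟩` on the `n`-qubit state space. -/
noncomputable def ip {n : ℕ} (φ ψ : QState n) : ℂ := ∑ x, (starRingEnd ℂ) (φ x) * ψ x

/-- The graph basis state `|h⟩_G = Z^h |G⟩`. -/
noncomputable def graphBasis {n : ℕ} (A : Matrix (Fin n) (Fin n) (ZMod 2))
    (h : Fin n → ZMod 2) : QState n := pauliZ h (graphState A)


/-! Write `ψ a = (-1)^a` for the nontrivial additive character of `ZMod 2` and
`Q x = Σ_{i<j} A_ij x_i x_j`, so that `|h⟩_G` has amplitudes `2^{-n/2} ψ (h·x + Q x)` and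
`(-1)^σ(A,k) = ψ (Q k)`. For symmetric `A` with zero diagonal, `Q (x + k) = Q x + Q k + x·Ak`.
Substituting `x ↦ x + k` in `⟨h| X^k Z^l |g⟩`, the two copies of `Q x` cancel and the matrix
element becomes `2^{-n} ψ (h·k + Q k) Σ_x ψ ((h + g + l + Ak)·x)`; by orthogonality of
characters the sum is `2^n` if `h + g + l + Ak = 0` and `0` otherwise. -/

open Matrix

theorem AddChar.map_sum_eq_prod {A M ι : Type*} [AddCommMonoid A] [CommMonoid M]
    (ψ : AddChar A M) (s : Finset ι) (f : ι → A) : ψ (∑ i ∈ s, f i) = ∏ i ∈ s, ψ (f i) := by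
  classical
  induction s using Finset.induction_on with
  | empty => simp
  | insert a s ha ih => rw [sum_insert ha, prod_insert ha, map_add_eq_mul, ih]

theorem AddChar.sum_apply_dotProduct {R R' ι : Type*} [CommRing R] [Fintype R] [DecidableEq R]
    [CommRing R'] [IsDomain R'] [Fintype ι] [DecidableEq ι] {ψ : AddChar R R'}
    (hψ : ψ.IsPrimitive) (v : ι → R) :
    ∑ x : ι → R, ψ (v ⬝ᵥ x) = if v = 0 then (Fintype.card R : R') ^ Fintype.card ι else 0 := by
  simp_rw [dotProduct, AddChar.map_sum_eq_prod]
  rw [← Fintype.prod_sum fun i b => ψ (v i * b)]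
  simp_rw [mul_comm (v _), AddChar.sum_mulShift _ hψ, Nat.cast_ite, Nat.cast_zero,
    Fintype.prod_ite_zero, funext_iff, Pi.zero_apply, Finset.prod_const, Finset.card_univ]

noncomputable def signChar : AddChar (ZMod 2) ℂ :=
  AddChar.zmodChar 2 (by norm_num : (-1 : ℂ) ^ 2 = 1)

lemma signChar_apply (a : ZMod 2) : signChar a = (-1) ^ a.val := AddChar.zmodChar_apply _ a

lemma signChar_isPrimitive : signChar.IsPrimitive :=
  AddChar.zmodChar_primitive_of_primitive_root 2 (IsPrimitiveRoot.neg_one 0 (by decide))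

@[simp]
lemma conj_signChar (a : ZMod 2) : starRingEnd ℂ (signChar a) = signChar a := by
  simp [signChar_apply]

lemma neg_one_pow_sum_val {ι : Type*} (s : Finset ι) (f : ι → ZMod 2) :
    (-1 : ℂ) ^ (∑ i ∈ s, (f i).val) = signChar (∑ i ∈ s, f i) := by
  simp [AddChar.map_sum_eq_prod, signChar_apply, Finset.prod_pow_eq_pow_sum]

lemma sum_signChar_dotProduct {n : ℕ} (v : Fin n → ZMod 2) :
    ∑ x : Fin n → ZMod 2, signChar (v ⬝ᵥ x) = if v = 0 then 2 ^ n else 0 := by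
  simp [AddChar.sum_apply_dotProduct signChar_isPrimitive]

section UpperQuadForm

variable {ι : Type*} [Fintype ι] [LinearOrder ι]

lemma sum_sum_eq_sum_filter_lt_add_swap {M : Type*} [AddCommMonoid M] (f : ι → ι → M)
    (hf : ∀ i, f i i = 0) :
    ∑ i, ∑ j, f i j = ∑ j, ∑ i ∈ univ.filter (· < j), (f i j + f j i) := by
  have split (i j : ι) : f i j = (if i < j then f i j else 0) + (if j < i then f i j else 0) := by
    rcases lt_trichotomy i j with hij | rfl | hij
    · simp [hij, hij.not_gt]
    · simp [hf]
    · simp [hij, hij.not_gt]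
  calc ∑ i, ∑ j, f i j
      = (∑ i, ∑ j, if i < j then f i j else 0) + ∑ i, ∑ j, if j < i then f i j else 0 := by
        rw [← Finset.sum_add_distrib]
        exact Finset.sum_congr rfl fun i _ => by
          rw [← Finset.sum_add_distrib]; simp only [← split]
    _ = ∑ j, ∑ i ∈ univ.filter (· < j), (f i j + f j i) := by
        rw [Finset.sum_comm (f := fun i j => if i < j then f i j else 0)]
        simp only [Finset.sum_filter, Finset.sum_add_distrib]

variable {R : Type*} [CommRing R]

def upperQuadForm (A : Matrix ι ι R) (x : ι → R) : R :=
  ∑ j, ∑ i ∈ univ.filter (· < j), A i j * x i * x j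

lemma upperQuadForm_add {A : Matrix ι ι R} (hA : A.IsSymm) (hdiag : ∀ i, A i i = 0)
    (x y : ι → R) :
    upperQuadForm A (x + y) = upperQuadForm A x + upperQuadForm A y + x ⬝ᵥ A *ᵥ y := by
  have hdot : x ⬝ᵥ A *ᵥ y = ∑ i, ∑ j, x i * A i j * y j := by
    simp [dotProduct, mulVec, Finset.mul_sum, mul_assoc]
  rw [hdot, sum_sum_eq_sum_filter_lt_add_swap _ (by simp [hdiag])]
  simp only [upperQuadForm, ← Finset.sum_add_distrib, Pi.add_apply, hA.apply]
  refine Finset.sum_congr rfl fun j _ => Finset.sum_congr rfl fun i _ => ?_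
  ring

end UpperQuadForm

section GraphState

variable {n : ℕ}

lemma neg_one_pow_sigmaA (A : Matrix (Fin n) (Fin n) (ZMod 2)) (k : Fin n → ZMod 2) :
    (-1 : ℂ) ^ sigmaA A k = signChar (upperQuadForm A k) := by
  simp only [sigmaA, upperQuadForm, ← Finset.prod_pow_eq_pow_sum, AddChar.map_sum_eq_prod,
    signChar_apply]
  refine Finset.prod_congr rfl fun j _ => Finset.prod_congr rfl fun i _ => ?_
  rw [mul_comm, mul_comm (k j), mul_assoc]

lemma graphState_apply (A : Matrix (Fin n) (Fin n) (ZMod 2)) (x : Fin n → ZMod 2) :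
    graphState A x = signChar (upperQuadForm A x) * (1 / (Real.sqrt (2 ^ n) : ℂ)) := by
  simp only [graphState, upperQuadForm, AddChar.map_sum_eq_prod, signChar_apply]

lemma pauliZ_apply (h : Fin n → ZMod 2) (ψ : QState n) (x : Fin n → ZMod 2) :
    pauliZ h ψ x = signChar (h ⬝ᵥ x) * ψ x := by
  rw [pauliZ, neg_one_pow_sum_val]
  rfl

lemma graphBasis_apply (A : Matrix (Fin n) (Fin n) (ZMod 2)) (h x : Fin n → ZMod 2) :
    graphBasis A h x =
      signChar (h ⬝ᵥ x + upperQuadForm A x) * (1 / (Real.sqrt (2 ^ n) : ℂ)) := by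
  rw [graphBasis, pauliZ_apply, graphState_apply, AddChar.map_add_eq_mul, mul_assoc]

lemma conj_graphBasis_add_mul_pauliZ_graphBasis {A : Matrix (Fin n) (Fin n) (ZMod 2)}
    (hA : A.IsSymm) (hdiag : ∀ i, A i i = 0) (h g k l y : Fin n → ZMod 2) :
    starRingEnd ℂ (graphBasis A h (y + k)) * pauliZ l (graphBasis A g) y =
      (1 / (Real.sqrt (2 ^ n) : ℂ)) ^ 2 * signChar (h ⬝ᵥ k + upperQuadForm A k) *
        signChar ((h + g + l + A *ᵥ k) ⬝ᵥ y) := by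
  have phase : h ⬝ᵥ (y + k) + upperQuadForm A (y + k) + (l ⬝ᵥ y + (g ⬝ᵥ y + upperQuadForm A y))
      = h ⬝ᵥ k + upperQuadForm A k + (h + g + l + A *ᵥ k) ⬝ᵥ y := by
    rw [upperQuadForm_add hA hdiag, dotProduct_add, add_dotProduct, add_dotProduct,
      add_dotProduct, dotProduct_comm y]
    linear_combination ZModModule.add_self (upperQuadForm A y)
  rw [mul_assoc _ (signChar _), ← AddChar.map_add_eq_mul, ← phase]
  simp only [pauliZ_apply, graphBasis_apply, map_mul, conj_signChar, AddChar.map_add_eq_mul,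
    map_div₀, map_one, Complex.conj_ofReal]
  ring

lemma inv_sqrt_two_pow_sq_mul_two_pow (n : ℕ) :
    (1 / (Real.sqrt (2 ^ n) : ℂ)) ^ 2 * 2 ^ n = 1 := by
  rw [div_pow, ← Complex.ofReal_pow, Real.sq_sqrt (by positivity)]
  push_cast
  field_simp

lemma ip_graphBasis_pauliX_pauliZ_graphBasis {A : Matrix (Fin n) (Fin n) (ZMod 2)}
    (hA : A.IsSymm) (hdiag : ∀ i, A i i = 0) (h g k l : Fin n → ZMod 2) :
    ip (graphBasis A h) (pauliX k (pauliZ l (graphBasis A g))) =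
      if h + g + l + A *ᵥ k = 0 then signChar (h ⬝ᵥ k + upperQuadForm A k) else 0 := by
  have reindex : ip (graphBasis A h) (pauliX k (pauliZ l (graphBasis A g))) =
      ∑ y, starRingEnd ℂ (graphBasis A h (y + k)) * pauliZ l (graphBasis A g) y := by
    refine Fintype.sum_equiv (Equiv.addRight k) _ _ fun x => ?_
    simp only [Equiv.coe_addRight, pauliX, add_assoc, ZModModule.add_self, add_zero]
  simp only [reindex, conj_graphBasis_add_mul_pauliZ_graphBasis hA hdiag, ← Finset.mul_sum,
    sum_signChar_dotProduct]
  split_ifs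
  · rw [mul_right_comm, inv_sqrt_two_pow_sq_mul_two_pow, one_mul]
  · rw [mul_zero]

end GraphState

/-- For an `n`-vertex graph with adjacency matrix `A` and bitstrings
`h, g, k, l ∈ {0,1}^n`, the matrix element `⟨h| X^k Z^l |g⟩` between graph basis
states equals `(-1)^{h·k + σ(A,k)}` if `A·k + l = h + g` over `ZMod 2`, and `0`
otherwise. -/
theorem stmt3 {n : ℕ} (A : Matrix (Fin n) (Fin n) (ZMod 2))
    (hsymm : A.IsSymm) (hdiag : ∀ i, A i i = 0) (h g k l : Fin n → ZMod 2) :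
    ip (graphBasis A h) (pauliX k (pauliZ l (graphBasis A g))) =
      if A.mulVec k + l = h + g
      then (-1 : ℂ) ^ ((∑ i, (h i * k i).val) + sigmaA A k) else 0 := by
  have condition : h + g + l + A *ᵥ k = 0 ↔ A *ᵥ k + l = h + g := by
    rw [show h + g + l + A *ᵥ k = A *ᵥ k + l + (h + g) by abel, add_eq_zero_iff_eq_neg,
      ZModModule.neg_eq_self]
  rw [ip_graphBasis_pauliX_pauliZ_graphBasis hsymm hdiag, pow_add, neg_one_pow_sum_val,
    neg_one_pow_sigmaA, ← AddChar.map_add_eq_mul]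
  exact if_congr condition rfl rfl
end

section
/- For the star graph K_{1,n−1} on n vertices (vertex 1 being the center), C(K_{1,n−1}, n, 3) = ∅; hence the maximum code distance d^max of any QECC containing the star graph state is at most 2. -/
open Finset

/-- Hamming weight of a bitstring. -/
def wt {ι : Type*} [Fintype ι] (k : ι → ZMod 2) : ℕ :=
  (univ.filter fun i => k i ≠ 0).card

/-- Hamming weight of the bitwise OR of two bitstrings. -/
def wtOr {ι : Type*} [Fintype ι] (k l : ι → ZMod 2) : ℕ :=
  (univ.filter fun i => k i ≠ 0 ∨ l i ≠ 0).card

/-- `Z(G,n,d) = {k : wt(k ∨ (A·k)) ≤ d - 1}`. -/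
def Zset {ι : Type*} [Fintype ι] (A : Matrix ι ι (ZMod 2)) (d : ℕ) :
    Set (ι → ZMod 2) :=
  {k | wtOr k (A.mulVec k) ≤ d - 1}

/-- `Z^⊥(G,n,d) = {h : h·k = 0 for all k ∈ Z(G,n,d)}`. -/
def Zperp {ι : Type*} [Fintype ι] (A : Matrix ι ι (ZMod 2)) (d : ℕ) :
    Set (ι → ZMod 2) :=
  {h | ∀ k ∈ Zset A d, ∑ i, h i * k i = 0}

/-- `W(G,n,d) = {A·m + l : wt(m ∨ l) ≤ d - 1}`. -/
def Wset {ι : Type*} [Fintype ι] (A : Matrix ι ι (ZMod 2)) (d : ℕ) :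
    Set (ι → ZMod 2) :=
  {h | ∃ m l, wtOr m l ≤ d - 1 ∧ A.mulVec m + l = h}

/-- `C(G,n,d) = Z^⊥(G,n,d) \ W(G,n,d)`. -/
def Cset {ι : Type*} [Fintype ι] (A : Matrix ι ι (ZMod 2)) (d : ℕ) :
    Set (ι → ZMod 2) :=
  Zperp A d \ Wset A d

/-- Adjacency matrix of the star graph `K_{1,n+1}` on `n + 2` vertices, with vertex
`0` the center. -/
def Astar (n : ℕ) : Matrix (Fin (n + 2)) (Fin (n + 2)) (ZMod 2) :=
  fun i j => if (i = 0 ∧ j ≠ 0) ∨ (j = 0 ∧ i ≠ 0) then 1 else 0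

lemma star_leaf_mem (n : ℕ) (d : ℕ) (hd : 3 ≤ d) (j : Fin (n+2)) (hj : j ≠ 0) :
    (fun i => if i = j then (1 : ZMod 2) else 0) ∈ Zset (Astar n) d := by
  have hmv : (Astar n).mulVec (fun i => if i = j then (1 : ZMod 2) else 0)
      = fun i => if i = 0 then 1 else 0 := by
    funext i
    simp only [Matrix.mulVec, dotProduct, mul_ite, mul_one, mul_zero,
      Finset.sum_ite_eq', Finset.mem_univ, if_true]
    by_cases hi : i = 0 <;> simp [Astar, hj, hi]
  simp only [Zset, wtOr, Set.mem_setOf_eq, hmv]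
  have hsub : (univ.filter fun i : Fin (n+2) =>
      (if i = j then (1 : ZMod 2) else 0) ≠ 0 ∨ (if i = 0 then (1 : ZMod 2) else 0) ≠ 0)
      ⊆ {j, 0} := by
    intro i hi
    simp only [mem_filter, mem_univ, true_and] at hi
    simp only [mem_insert, mem_singleton]
    rcases hi with h1 | h1
    · left; by_contra hi'; simp [hi'] at h1
    · right; by_contra hi'; simp [hi'] at h1
  calc (univ.filter fun i : Fin (n+2) =>
      (if i = j then (1 : ZMod 2) else 0) ≠ 0 ∨ (if i = 0 then (1 : ZMod 2) else 0) ≠ 0).card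
      ≤ ({j, 0} : Finset (Fin (n+2))).card := Finset.card_le_card hsub
    _ = 2 := Finset.card_pair hj
    _ ≤ d - 1 := by omega

lemma zperp_mem_wset (n : ℕ) (d : ℕ) (hd : 3 ≤ d) (h : Fin (n+2) → ZMod 2)
    (hZ : h ∈ Zperp (Astar n) d) : h ∈ Wset (Astar n) d := by
  have hzero : ∀ j : Fin (n+2), j ≠ 0 → h j = 0 := by
    intro j hj
    have := hZ _ (star_leaf_mem n d hd j hj)
    simpa [mul_ite, mul_one, mul_zero, Finset.sum_ite_eq'] using this
  refine ⟨0, h, ?_, by simp [Matrix.mulVec_zero]⟩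
  unfold wtOr
  have hsub : (univ.filter fun i : Fin (n+2) => (0 : ZMod 2) ≠ 0 ∨ h i ≠ 0)
      ⊆ {0} := by
    intro i hi
    simp only [mem_filter, mem_univ, true_and, ne_eq, not_true_eq_false, false_or] at hi
    simp only [mem_singleton]
    by_contra hi'
    exact hi (hzero i hi')
  calc _ ≤ ({0} : Finset (Fin (n+2))).card := Finset.card_le_card hsub
    _ ≤ d - 1 := by simp; omega

/-- For the star graph on `n + 2` vertices, `C(K_{1,n+1}, n+2, 3) = ∅`;
hence `C(K_{1,n+1}, n+2, d) = ∅` for every `d ≥ 3`, i.e. the maximum code distance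
`d^max` of any QECC containing the star graph state is at most `2`. -/
theorem stmt7 (n : ℕ) :
    Cset (Astar n) 3 = ∅ ∧ ∀ d, 3 ≤ d → Cset (Astar n) d = ∅ := by
  have key : ∀ d, 3 ≤ d → Cset (Astar n) d = ∅ := by
    intro d hd
    ext h
    simp only [Set.mem_empty_iff_false, iff_false, Cset, Set.mem_diff, not_and, not_not]
    intro hZ
    exact zperp_mem_wset n d hd h hZ
  exact ⟨key 3 le_rfl, key⟩
end

section
/- For the complete graph K_n (n ≥ 3) with adjacency matrix A = J − I over Z_2, the weight-two bitstrings c^i = b^i + b^{i+1} (1 ≤ i ≤ n−1) satisfy wt((A·c^i) ∨ c^i) = 2, the only bitstrings orthogonal to all c^i are 0^n and 1^n, and both lie in W(K_n, n, 3); hence C(K_n, n, 3) = ∅. -/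
open Finset

/-- Adjacency matrix `J - I` of the complete graph `K_{n+3}`. -/
def Acomplete (n : ℕ) : Matrix (Fin (n + 3)) (Fin (n + 3)) (ZMod 2) :=
  fun i j => if i = j then 0 else 1

/-- The weight-two bitstring `c^i = b^i + b^{i+1}`. -/
def cvec (n : ℕ) (i : Fin (n + 3)) (h : (i : ℕ) + 1 < n + 3) : Fin (n + 3) → ZMod 2 :=
  Pi.single i 1 + Pi.single (⟨(i : ℕ) + 1, h⟩ : Fin (n + 3)) 1

lemma cvec_ne (n : ℕ) (i : Fin (n + 3)) (h : (i : ℕ) + 1 < n + 3) :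
    i ≠ (⟨(i : ℕ) + 1, h⟩ : Fin (n + 3)) := by
  intro he
  have := congrArg Fin.val he
  simp at this

lemma sum_cvec (n : ℕ) (i : Fin (n + 3)) (h : (i : ℕ) + 1 < n + 3) :
    ∑ j, cvec n i h j = 0 := by
  simp [cvec, Finset.sum_add_distrib, Finset.sum_pi_single']
  decide

lemma mulVec_cvec (n : ℕ) (i : Fin (n + 3)) (h : (i : ℕ) + 1 < n + 3) :
    (Acomplete n).mulVec (cvec n i h) = cvec n i h := by
  funext j
  rw [Matrix.mulVec, dotProduct]
  simp only [Acomplete, ite_mul, zero_mul, one_mul]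
  rw [← Finset.add_sum_erase _ _ (Finset.mem_univ j), if_pos rfl, zero_add]
  rw [Finset.sum_congr rfl (fun x hx => if_neg (Finset.ne_of_mem_erase hx).symm)]
  rw [Finset.sum_erase_eq_sub (Finset.mem_univ j), sum_cvec, zero_sub, CharTwo.neg_eq]

lemma dot_cvec (n : ℕ) (x : Fin (n + 3) → ZMod 2) (i : Fin (n + 3))
    (h : (i : ℕ) + 1 < n + 3) :
    ∑ j, x j * cvec n i h j = x i + x (⟨(i : ℕ) + 1, h⟩ : Fin (n + 3)) := by
  simp [cvec, mul_add, Finset.sum_add_distrib, Pi.single_apply, mul_ite,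
    Finset.sum_ite_eq, Finset.sum_ite_eq']

lemma const_of_adj (n : ℕ) (x : Fin (n + 3) → ZMod 2)
    (hx : ∀ (i : Fin (n + 3)) (h : (i : ℕ) + 1 < n + 3),
      x i = x (⟨(i : ℕ) + 1, h⟩ : Fin (n + 3))) :
    ∀ j : Fin (n + 3), x j = x ⟨0, by omega⟩ := by
  intro j
  obtain ⟨v, hv⟩ := j
  induction v with
  | zero => rfl
  | succ k ih =>
    have hk : k < n + 3 := by omega
    rw [← hx ⟨k, hk⟩ hv]
    exact ih hk

/-- For the complete graph `K_{n+3}` with adjacency matrix `A = J - I`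
over `ZMod 2`, the weight-two bitstrings `c^i = b^i + b^{i+1}` satisfy
`wt((A·c^i) ∨ c^i) = 2`; the only bitstrings orthogonal to all `c^i` are `0` and the
all-ones string; both lie in `W(K_{n+3}, n+3, 3)`; hence `C(K_{n+3}, n+3, 3) = ∅`. -/
theorem stmt8 (n : ℕ) :
    (∀ (i : Fin (n + 3)) (h : (i : ℕ) + 1 < n + 3),
        wtOr ((Acomplete n).mulVec (cvec n i h)) (cvec n i h) = 2) ∧
    (∀ x : Fin (n + 3) → ZMod 2,
        (∀ (i : Fin (n + 3)) (h : (i : ℕ) + 1 < n + 3), ∑ j, x j * cvec n i h j = 0) ↔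
          (x = 0 ∨ x = fun _ => 1)) ∧
    ((0 : Fin (n + 3) → ZMod 2) ∈ Wset (Acomplete n) 3 ∧
      (fun _ => (1 : ZMod 2)) ∈ Wset (Acomplete n) 3) ∧
    Cset (Acomplete n) 3 = ∅ := by
  have part1 : ∀ (i : Fin (n + 3)) (h : (i : ℕ) + 1 < n + 3),
      wtOr ((Acomplete n).mulVec (cvec n i h)) (cvec n i h) = 2 := by
    intro i h
    have hne := cvec_ne n i h
    rw [wtOr, mulVec_cvec]
    have hs : (univ.filter fun j => cvec n i h j ≠ 0 ∨ cvec n i h j ≠ 0)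
        = {i, (⟨(i : ℕ) + 1, h⟩ : Fin (n + 3))} := by
      ext j
      simp only [Finset.mem_filter, Finset.mem_univ, true_and, or_self,
        Finset.mem_insert, Finset.mem_singleton, cvec, Pi.add_apply, Pi.single_apply]
      by_cases h1 : j = i <;>
        by_cases h2 : j = (⟨(i : ℕ) + 1, h⟩ : Fin (n + 3)) <;>
        simp [h1, h2, hne, Ne.symm hne]
    rw [hs, Finset.card_insert_of_notMem (by simp [hne]), Finset.card_singleton]
  have part2 : ∀ x : Fin (n + 3) → ZMod 2,
      (∀ (i : Fin (n + 3)) (h : (i : ℕ) + 1 < n + 3), ∑ j, x j * cvec n i h j = 0) ↔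
        (x = 0 ∨ x = fun _ => 1) := by
    intro x
    constructor
    · intro hx
      have hadj : ∀ (i : Fin (n + 3)) (h : (i : ℕ) + 1 < n + 3),
          x i = x (⟨(i : ℕ) + 1, h⟩ : Fin (n + 3)) := by
        intro i h
        have := hx i h
        rw [dot_cvec, CharTwo.add_eq_iff_eq_add, zero_add] at this
        exact this
      have hc := const_of_adj n x hadj
      have h01 : ∀ a : ZMod 2, a = 0 ∨ a = 1 := by decide
      rcases h01 (x ⟨0, by omega⟩) with h0 | h0
      · left; funext j; rw [hc j, h0]; rfl
      · right; funext j; rw [hc j, h0]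
    · rintro (rfl | rfl)
      · intro i h; simp
      · intro i h
        simpa using sum_cvec n i h
  have part3a : (0 : Fin (n + 3) → ZMod 2) ∈ Wset (Acomplete n) 3 := by
    refine ⟨0, 0, ?_, by simp [Matrix.mulVec_zero]⟩
    simp [wtOr]
  have part3b : (fun _ => (1 : ZMod 2)) ∈ Wset (Acomplete n) 3 := by
    set z : Fin (n + 3) := ⟨0, by omega⟩
    have hwt : wtOr ((Pi.single z 1 : Fin (n + 3) → ZMod 2)) ((Pi.single z 1 : Fin (n + 3) → ZMod 2)) ≤ 3 - 1 := by
      have hs : (univ.filter fun j => (Pi.single z 1 : Fin (n + 3) → ZMod 2) j ≠ 0 ∨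
          (Pi.single z 1 : Fin (n + 3) → ZMod 2) j ≠ 0) = {z} := by
        ext j
        simp [Pi.single_apply]
      rw [wtOr, hs]
      simp
    have heq : (Acomplete n).mulVec ((Pi.single z 1 : Fin (n + 3) → ZMod 2)) + (Pi.single z 1 : Fin (n + 3) → ZMod 2)
        = fun _ => (1 : ZMod 2) := by
      funext j
      have : (Acomplete n).mulVec ((Pi.single z 1 : Fin (n + 3) → ZMod 2)) j = if j = z then 0 else 1 := by
        rw [Matrix.mulVec, dotProduct]
        simp [Acomplete, Pi.single_apply, mul_ite, Finset.sum_ite_eq, Finset.sum_ite_eq']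
      rw [Pi.add_apply, this, Pi.single_apply]
      by_cases hj : j = z <;> simp [hj]
    exact ⟨_, _, hwt, heq⟩
  refine ⟨part1, part2, ⟨part3a, part3b⟩, ?_⟩
  rw [Set.eq_empty_iff_forall_notMem]
  intro x hx
  apply hx.2
  have hzperp := hx.1
  have horth : ∀ (i : Fin (n + 3)) (h : (i : ℕ) + 1 < n + 3),
      ∑ j, x j * cvec n i h j = 0 := by
    intro i h
    apply hzperp
    show wtOr (cvec n i h) ((Acomplete n).mulVec (cvec n i h)) ≤ 3 - 1
    rw [mulVec_cvec]
    have := part1 i h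
    rw [mulVec_cvec] at this
    omega
  rcases (part2 x).mp horth with rfl | rfl
  · exact part3a
  · exact part3b
end

section
/- Let K_m be the complete graph on m vertices and A' the adjacency matrix of its line graph L(K_m) over Z_2. For any bitstring k ∈ {0,1}^{E(K_m)}, A'·k = Σ_{v ∈ V_k^o} s^v, where V_k^o is the set of vertices having odd degree in the subgraph (K_m)_k spanned by the edges indexed by k, and s^v is the indicator bitstring of edges incident to v. Consequently wt(A'·k) = l_k (m − l_k) where l_k = |V_k^o|. -/
open Finset

/-- The edges of the complete graph `K_m`: non-diagonal unordered pairs of vertices. -/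
abbrev EdgeK (m : ℕ) := {e : Sym2 (Fin m) // ¬ e.IsDiag}

/-- Adjacency matrix (over `ZMod 2`) of the line graph `L(K_m)`: two distinct edges of
`K_m` are adjacent iff they share an endpoint. -/
def lineAdj (m : ℕ) : Matrix (EdgeK m) (EdgeK m) (ZMod 2) :=
  fun e f => if e ≠ f ∧ ∃ v, v ∈ e.1 ∧ v ∈ f.1 then 1 else 0

/-- `s^v`: the indicator bitstring of the edges of `K_m` incident to vertex `v`. -/
def sv (m : ℕ) (v : Fin m) : EdgeK m → ZMod 2 := fun e => if v ∈ e.1 then 1 else 0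

/-- The degree of vertex `v` in the subgraph `(K_m)_k` spanned by the edges indexed
by the bitstring `k`. -/
def degSub (m : ℕ) (k : EdgeK m → ZMod 2) (v : Fin m) : ℕ :=
  (univ.filter fun e : EdgeK m => k e = 1 ∧ v ∈ e.1).card

/-- `V_k^o`: the set of vertices of odd degree in the subgraph `(K_m)_k`. -/
def Vodd (m : ℕ) (k : EdgeK m → ZMod 2) : Finset (Fin m) :=
  univ.filter fun v => Odd (degSub m k v)

lemma zmod2_em (x : ZMod 2) : x = 0 ∨ x = 1 := by revert x; decide

lemma zmod2_add_self (x : ZMod 2) : x + x = 0 := by revert x; decide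

lemma oddcast (n : ℕ) : (n : ZMod 2) = if Odd n then 1 else 0 := by
  rcases Nat.even_or_odd n with ⟨c, rfl⟩ | ⟨c, rfl⟩
  · have h : ¬ Odd (c + c) := by rw [Nat.odd_iff]; omega
    rw [if_neg h]; push_cast; exact zmod2_add_self c
  · have h : Odd (2 * c + 1) := ⟨c, rfl⟩
    rw [if_pos h]; push_cast
    rw [show (2 : ZMod 2) = 0 from rfl]; ring

lemma sumZ (m : ℕ) (k : EdgeK m → ZMod 2) (v : Fin m) :
    ∑ f : EdgeK m, (if v ∈ f.1 then k f else 0) = (degSub m k v : ZMod 2) := by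
  rw [degSub, ← Finset.sum_boole]
  apply Finset.sum_congr rfl
  intro f _
  rcases zmod2_em (k f) with hk | hk <;> by_cases hv : v ∈ f.1 <;> simp [hk, hv]

lemma gval (m : ℕ) (k : EdgeK m → ZMod 2) (a b : Fin m) (h : ¬ (s(a, b) : Sym2 (Fin m)).IsDiag) :
    (∑ v ∈ Vodd m k, sv m v) (⟨s(a, b), h⟩ : EdgeK m)
      = (if a ∈ Vodd m k then 1 else 0) + (if b ∈ Vodd m k then 1 else 0) := by
  have hab : a ≠ b := by simpa using h
  rw [Finset.sum_apply]
  have step : ∀ v ∈ Vodd m k, sv m v (⟨s(a, b), h⟩ : EdgeK m)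
      = (if v = a then (1 : ZMod 2) else 0) + (if v = b then 1 else 0) := by
    intro v _
    by_cases h1 : v = a <;> by_cases h2 : v = b
    · exact absurd (h1 ▸ h2) hab
    all_goals simp [sv, Sym2.mem_iff, h1, h2, hab, Ne.symm hab]
  rw [Finset.sum_congr rfl step, Finset.sum_add_distrib, Finset.sum_ite_eq', Finset.sum_ite_eq']

lemma part1 (m : ℕ) (k : EdgeK m → ZMod 2) :
    (lineAdj m).mulVec k = ∑ v ∈ Vodd m k, sv m v := by
  funext e
  obtain ⟨e, he⟩ := e
  revert he
  induction e using Sym2.ind with | _ a b =>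
  intro he
  have hab : a ≠ b := by simpa using he
  rw [gval m k a b he]
  simp only [Matrix.mulVec, dotProduct]
  have key : ∀ f : EdgeK m, lineAdj m ⟨s(a, b), he⟩ f * k f
      = (if a ∈ f.1 then k f else 0) + (if b ∈ f.1 then k f else 0) := by
    intro f
    by_cases hf : (⟨s(a, b), he⟩ : EdgeK m) = f
    · rw [← hf]
      simp [lineAdj, zmod2_add_self]
    · have hnb : ¬(a ∈ f.1 ∧ b ∈ f.1) := by
        rintro ⟨h1, h2⟩
        exact hf (Subtype.ext ((Sym2.mem_and_mem_iff hab).mp ⟨h1, h2⟩).symm)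
      by_cases h1 : a ∈ f.1 <;> by_cases h2 : b ∈ f.1
      · exact absurd ⟨h1, h2⟩ hnb
      · rw [lineAdj, if_pos ⟨hf, a, Sym2.mem_mk_left a b, h1⟩]
        simp [h1, h2]
      · rw [lineAdj, if_pos ⟨hf, b, Sym2.mem_mk_right a b, h2⟩]
        simp [h1, h2]
      · rw [lineAdj, if_neg]
        · simp [h1, h2]
        · rintro ⟨-, v, hv, hvf⟩
          rw [Sym2.mem_iff] at hv
          rcases hv with rfl | rfl
          · exact h1 hvf
          · exact h2 hvf
  rw [Finset.sum_congr rfl fun f _ => key f, Finset.sum_add_distrib, sumZ, sumZ,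
    oddcast, oddcast]
  simp [Vodd]

theorem stmt11_aux (m : ℕ) (k : EdgeK m → ZMod 2) :
    (lineAdj m).mulVec k = ∑ v ∈ Vodd m k, sv m v ∧
    wt ((lineAdj m).mulVec k) = (Vodd m k).card * (m - (Vodd m k).card) := by
  refine ⟨part1 m k, ?_⟩
  rw [part1 m k, wt]
  have hcard : ((Vodd m k) ×ˢ (Vodd m k)ᶜ).card
      = (Vodd m k).card * (m - (Vodd m k).card) := by
    rw [Finset.card_product, Finset.card_compl, Fintype.card_fin]
  rw [← hcard]
  refine (Finset.card_bij
    (fun p hp => (⟨s(p.1, p.2), by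
      obtain ⟨h1, h2⟩ := Finset.mem_product.mp hp
      rw [Finset.mem_compl] at h2
      simp only [Sym2.mk_isDiag_iff]
      intro hh; exact h2 (hh ▸ h1)⟩ : EdgeK m)) ?_ ?_ ?_).symm
  · intro p hp
    obtain ⟨h1, h2⟩ := Finset.mem_product.mp hp
    rw [Finset.mem_compl] at h2
    rw [Finset.mem_filter]
    refine ⟨Finset.mem_univ _, ?_⟩
    rw [gval, if_pos h1, if_neg h2]
    decide
  · intro p hp q hq hpq
    obtain ⟨hp1, hp2⟩ := Finset.mem_product.mp hp
    obtain ⟨hq1, hq2⟩ := Finset.mem_product.mp hq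
    rw [Finset.mem_compl] at hp2 hq2
    simp only [Subtype.mk.injEq, Sym2.eq_iff] at hpq
    rcases hpq with ⟨h1, h2⟩ | ⟨h1, h2⟩
    · exact Prod.ext h1 h2
    · exact absurd (h1 ▸ hq2) (fun hh => hh hp1)
  · rintro ⟨e, he⟩ hb
    rw [Finset.mem_filter] at hb
    revert he hb
    induction e using Sym2.ind with | _ a b =>
    intro he hb
    rw [gval m k a b he] at hb
    have hx : (a ∈ Vodd m k ∧ b ∉ Vodd m k) ∨ (b ∈ Vodd m k ∧ a ∉ Vodd m k) := by
      by_cases h1 : a ∈ Vodd m k <;> by_cases h2 : b ∈ Vodd m k <;>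
          simp [h1, h2] at hb ⊢
      exact hb (by decide)
    rcases hx with ⟨h1, h2⟩ | ⟨h1, h2⟩
    · exact ⟨(a, b), Finset.mem_product.mpr ⟨h1, Finset.mem_compl.mpr h2⟩, rfl⟩
    · exact ⟨(b, a), Finset.mem_product.mpr ⟨h1, Finset.mem_compl.mpr h2⟩,
        Subtype.ext (Sym2.eq_swap)⟩


/-- For the line graph `L(K_m)` of the complete graph with adjacency
matrix `A'` over `ZMod 2`, and any bitstring `k` indexed by the edges of `K_m`,
`A'·k = Σ_{v ∈ V_k^o} s^v`, where `V_k^o` is the set of vertices of odd degree in the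
subgraph `(K_m)_k`; consequently `wt(A'·k) = l_k (m - l_k)` with `l_k = |V_k^o|`. -/
theorem stmt11 (m : ℕ) (k : EdgeK m → ZMod 2) :
    (lineAdj m).mulVec k = ∑ v ∈ Vodd m k, sv m v ∧
    wt ((lineAdj m).mulVec k) = (Vodd m k).card * (m - (Vodd m k).card) := by
  exact stmt11_aux m k
end

section
/- Every cycle of length greater than 4 in the complete bipartite graph K_{m,m} can be written as a symmetric difference of edge sets of 4-edge cycles of K_{m,m}. -/
/-!
In `K_{m,m}` the ends of any three consecutive edges `v v₁ v₂ v₃` of a closed walk are adjacent,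
so over `ZMod 2` the edge multiset of the walk is the sum of that of the square `v v₁ v₂ v₃ v` and
that of the closed walk two steps shorter in which the detour is replaced by the chord `v v₃`
(the chord is counted twice). A square with a repeated vertex traverses every edge an even number
of times, so it contributes nothing; a genuine square is a 4-cycle. By induction on the length,
the edge counts mod 2 of every closed walk are a sum of 4-cycles, and for a cycle they are the
indicator of its edge set.
-/

open Finset

/-- A 4-edge cycle of the complete bipartite graph `K_{m,m}` on parts
`X = Fin m ⊕ ∅` and `Y`, as a set of edges: it visits two distinct vertices of `X`
and two distinct vertices of `Y`. -/
def IsFourCycle (m : ℕ) (t : Finset (Sym2 (Fin m ⊕ Fin m))) : Prop :=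
  ∃ a c b d : Fin m, a ≠ c ∧ b ≠ d ∧
    t = {s(Sum.inl a, Sum.inr b), s(Sum.inr b, Sum.inl c),
         s(Sum.inl c, Sum.inr d), s(Sum.inr d, Sum.inl a)}

open Sum SimpleGraph

theorem Finset.sum_symmDiff_of_add_self {α M : Type*} [DecidableEq α] [AddCommMonoid M]
    (h2 : ∀ x : M, x + x = 0) (S T : Finset α) (φ : α → M) :
    ∑ x ∈ symmDiff S T, φ x = ∑ x ∈ S, φ x + ∑ x ∈ T, φ x := by
  rw [← sum_union_inter, ← sum_sdiff (inter_subset_union (s := S) (t := T)), add_assoc, h2,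
    add_zero, symmDiff_eq_sup_sdiff_inf]
  rfl

theorem List.Nodup.cast_count_eq_ite {α R : Type*} [DecidableEq α] [AddMonoidWithOne R]
    {l : List α} (h : l.Nodup) (a : α) : (l.count a : R) = if a ∈ l then 1 else 0 := by
  split_ifs with ha
  · rw [List.count_eq_one_of_mem h ha, Nat.cast_one]
  · rw [List.count_eq_zero.mpr ha, Nat.cast_zero]

theorem completeBipartiteGraph.adj_of_adj_of_adj_of_adj {V W : Type*} {a b c d : V ⊕ W}
    (hab : (completeBipartiteGraph V W).Adj a b) (hbc : (completeBipartiteGraph V W).Adj b c)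
    (hcd : (completeBipartiteGraph V W).Adj c d) : (completeBipartiteGraph V W).Adj a d := by
  cases a <;> cases b <;> cases c <;> cases d <;> simp_all

def IsFourCycleSum (m : ℕ) (f : Sym2 (Fin m ⊕ Fin m) → ZMod 2) : Prop :=
  ∃ T : Finset (Finset (Sym2 (Fin m ⊕ Fin m))),
    (∀ t ∈ T, IsFourCycle m t) ∧ f = fun e => ∑ t ∈ T, if e ∈ t then 1 else 0

namespace IsFourCycleSum

variable {m : ℕ} {f g : Sym2 (Fin m ⊕ Fin m) → ZMod 2}

theorem zero : IsFourCycleSum m 0 := ⟨∅, by simp, by simp; rfl⟩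

theorem of_isFourCycle {t : Finset (Sym2 (Fin m ⊕ Fin m))} (ht : IsFourCycle m t) :
    IsFourCycleSum m fun e => if e ∈ t then 1 else 0 :=
  ⟨{t}, by simpa using ht, by simp only [sum_singleton]⟩

theorem add (hf : IsFourCycleSum m f) (hg : IsFourCycleSum m g) : IsFourCycleSum m (f + g) := by
  obtain ⟨S, hS, rfl⟩ := hf
  obtain ⟨T, hT, rfl⟩ := hg
  refine ⟨symmDiff S T, fun t ht => ?_, ?_⟩
  · rcases mem_symmDiff.mp ht with ⟨ht, -⟩ | ⟨ht, -⟩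
    exacts [hS t ht, hT t ht]
  · ext e
    rw [sum_symmDiff_of_add_self CharTwo.add_self_eq_zero]
    rfl

end IsFourCycleSum

theorem isFourCycleSum_square_inl {m : ℕ} (a b c d : Fin m) :
    IsFourCycleSum m fun e =>
      ([s(inl a, inr b), s(inr b, inl c), s(inl c, inr d), s(inr d, inl a)].count e : ZMod 2) := by
  by_cases hnd : [s(inl a, inr b), s(inr b, inl c), s(inl c, inr d), s(inr d, inl a)].Nodup
  · have hac : a ≠ c := by rintro rfl; simp at hnd
    have hbd : b ≠ d := by rintro rfl; simp at hnd
    have hsq := IsFourCycleSum.of_isFourCycle (m := m) ⟨a, c, b, d, hac, hbd, rfl⟩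
    convert hsq using 2 with e
    rw [hnd.cast_count_eq_ite]
    simp
  · have hdeg : a = c ∨ b = d := by
      by_contra! h
      exact hnd (by simp [h.1, h.2, Ne.symm h.1])
    convert IsFourCycleSum.zero (m := m) using 1
    ext e
    rcases hdeg with rfl | rfl <;>
    · simp only [List.count_cons, List.count_nil, Sym2.eq_swap, Pi.zero_apply]
      push_cast
      ring_nf
      reduce_mod_char

theorem isFourCycleSum_square {m : ℕ} {a b c d : Fin m ⊕ Fin m}
    (hab : (completeBipartiteGraph (Fin m) (Fin m)).Adj a b)
    (hbc : (completeBipartiteGraph (Fin m) (Fin m)).Adj b c)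
    (hcd : (completeBipartiteGraph (Fin m) (Fin m)).Adj c d) :
    IsFourCycleSum m fun e => ([s(a, b), s(b, c), s(c, d), s(d, a)].count e : ZMod 2) := by
  rcases a with a | a <;> rcases b with b | b <;> rcases c with c | c <;> rcases d with d | d <;>
    simp at hab hbc hcd
  · exact isFourCycleSum_square_inl a b c d
  · convert isFourCycleSum_square_inl b c d a using 3 with e
    simp only [List.count_cons, List.count_nil]
    omega

theorem isFourCycleSum_count_edges {m : ℕ} {v : Fin m ⊕ Fin m} :
    ∀ p : (completeBipartiteGraph (Fin m) (Fin m)).Walk v v,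
      IsFourCycleSum m fun e => (p.edges.count e : ZMod 2)
  | .nil => by convert IsFourCycleSum.zero (m := m); simp
  | .cons h .nil => (h.ne rfl).elim
  | .cons _ (.cons _ .nil) => by
      convert IsFourCycleSum.zero (m := m) using 1
      ext e
      simp only [Walk.edges_cons, Walk.edges_nil, List.count_cons, List.count_nil, Sym2.eq_swap,
        Pi.zero_apply]
      push_cast
      ring_nf
      reduce_mod_char
  | .cons h₁ (.cons h₂ (.cons h₃ p)) => by
      have chord := completeBipartiteGraph.adj_of_adj_of_adj_of_adj h₁ h₂ h₃
      convert (isFourCycleSum_square h₁ h₂ h₃).add (isFourCycleSum_count_edges (.cons chord p))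
        using 1
      ext e
      -- `simp` uses `Sym2.eq_swap` as an ordered rewrite, giving `s(v, v₃)` and `s(v₃, v)` one form
      simp only [Walk.edges_cons, List.count_cons, List.count_nil, Sym2.eq_swap, Pi.add_apply]
      push_cast
      ring_nf
      reduce_mod_char
termination_by p => p.length

theorem stmt13_general (m : ℕ) (v : Fin m ⊕ Fin m)
    (w : (completeBipartiteGraph (Fin m) (Fin m)).Walk v v)
    (hw : w.IsCycle) :
    ∃ T : Finset (Finset (Sym2 (Fin m ⊕ Fin m))),
      (∀ t ∈ T, IsFourCycle m t) ∧
      ∀ e : Sym2 (Fin m ⊕ Fin m),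
        (if e ∈ w.edges then (1 : ZMod 2) else 0) = ∑ t ∈ T, (if e ∈ t then 1 else 0) := by
  obtain ⟨T, hT, hsum⟩ := isFourCycleSum_count_edges w
  exact ⟨T, hT, fun e => by rw [← hw.edges_nodup.cast_count_eq_ite, congrFun hsum e]⟩

/-- Every cycle of length greater than `4` in the complete bipartite
graph `K_{m,m}` can be written as a symmetric difference of edge sets of 4-edge
cycles of `K_{m,m}`: the `ZMod 2` indicator of its edge set is the sum of the
indicators of the 4-cycles in some finite family `T` of 4-cycles. -/
theorem stmt13 (m : ℕ) (v : Fin m ⊕ Fin m)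
    (w : (completeBipartiteGraph (Fin m) (Fin m)).Walk v v)
    (hw : w.IsCycle) (hlen : 4 < w.length) :
    ∃ T : Finset (Finset (Sym2 (Fin m ⊕ Fin m))),
      (∀ t ∈ T, IsFourCycle m t) ∧
      ∀ e : Sym2 (Fin m ⊕ Fin m),
        (if e ∈ w.edges then (1 : ZMod 2) else 0) = ∑ t ∈ T, (if e ∈ t then 1 else 0) :=
  stmt13_general m v w hw
end

section
/- Let A' be the adjacency matrix of the line graph of K_{m,m} over Z_2. For any k ∈ {0,1}^{E(K_{m,m})}, wt(A'·k) = m(l_k^x + l_k^y) − 2 l_k^x l_k^y, where l_k^x and l_k^y are the numbers of vertices of odd degree in the subgraph (K_{m,m})_k lying in the two parts X and Y respectively. -/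
open Finset

/-- Adjacency matrix (over `ZMod 2`) of the line graph `L(K_{m,m})` (the rook's
graph): the edges of `K_{m,m}` are labelled by pairs `(i,j) ∈ Fin m × Fin m`
(connecting `x_i` to `y_j`), and two distinct edges are adjacent iff they share an
endpoint. -/
def rookAdj (m : ℕ) : Matrix (Fin m × Fin m) (Fin m × Fin m) (ZMod 2) :=
  fun e f => if e ≠ f ∧ (e.1 = f.1 ∨ e.2 = f.2) then 1 else 0

/-- Degree of the vertex `x_i ∈ X` in the subgraph `(K_{m,m})_k`. -/
def degX (m : ℕ) (k : Fin m × Fin m → ZMod 2) (i : Fin m) : ℕ :=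
  (univ.filter fun j => k (i, j) = 1).card

/-- Degree of the vertex `y_j ∈ Y` in the subgraph `(K_{m,m})_k`. -/
def degY (m : ℕ) (k : Fin m × Fin m → ZMod 2) (j : Fin m) : ℕ :=
  (univ.filter fun i => k (i, j) = 1).card

/-- `l_k^x`: number of odd-degree vertices of `(K_{m,m})_k` in part `X`. -/
def lX (m : ℕ) (k : Fin m × Fin m → ZMod 2) : ℕ :=
  (univ.filter fun i => Odd (degX m k i)).card

/-- `l_k^y`: number of odd-degree vertices of `(K_{m,m})_k` in part `Y`. -/
def lY (m : ℕ) (k : Fin m × Fin m → ZMod 2) : ℕ :=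
  (univ.filter fun j => Odd (degY m k j)).card

/-!
Over `ZMod 2` an edge `f` is adjacent to `e` in `L(K_{m,m})` exactly when it shares an
odd number of endpoints with `e`, so the row of `A'` at `e = (x_i, y_j)` is the sum of the
indicator of the star at `x_i` and that of the star at `y_j`. Hence `(A'·k)_e` is
`deg x_i + deg y_j mod 2`, which is nonzero iff exactly one of `x_i`, `y_j` has odd degree.
Counting these pairs gives `l_x (m - l_y) + (m - l_x) l_y`.
-/

lemma sum_zmod_two_eq_card_filter {ι : Type*} (s : Finset ι) (f : ι → ZMod 2) :
    ∑ i ∈ s, f i = (#{i ∈ s | f i = 1} : ZMod 2) := by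
  have hf : ∀ i, f i = if f i = 1 then 1 else 0 := fun i => by
    generalize f i = x; revert x; decide
  rw [sum_congr rfl fun i _ => hf i, sum_boole]

lemma card_filter_xor_product {α β : Type*} (s : Finset α) (t : Finset β)
    (p : α → Prop) (q : β → Prop) [DecidablePred p] [DecidablePred q] :
    #{x ∈ s ×ˢ t | Xor (p x.1) (q x.2)} =
      #{a ∈ s | p a} * (#t - #{b ∈ t | q b}) + (#s - #{a ∈ s | p a}) * #{b ∈ t | q b} := by
  classical
  have hsplit : {x ∈ s ×ˢ t | Xor (p x.1) (q x.2)} =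
      {a ∈ s | p a} ×ˢ {b ∈ t | ¬q b} ∪ {a ∈ s | ¬p a} ×ˢ {b ∈ t | q b} := by
    ext ⟨a, b⟩
    simp only [mem_filter, mem_union, mem_product]
    unfold Xor
    tauto
  have hdisj : Disjoint ({a ∈ s | p a} ×ˢ {b ∈ t | ¬q b}) ({a ∈ s | ¬p a} ×ˢ {b ∈ t | q b}) :=
    disjoint_product.mpr (.inl (disjoint_filter_filter_not _ _ _))
  rw [hsplit, card_union_of_disjoint hdisj, card_product, card_product,
    Nat.eq_sub_of_add_eq' (card_filter_add_card_filter_not (s := s) p),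
    Nat.eq_sub_of_add_eq' (card_filter_add_card_filter_not (s := t) q)]

lemma Nat.mul_tsub_add_tsub_mul {m a b : ℕ} (ha : a ≤ m) (hb : b ≤ m) :
    a * (m - b) + (m - a) * b = m * (a + b) - 2 * (a * b) := by
  have : 2 * (a * b) ≤ m * (a + b) := by nlinarith
  zify [ha, hb, this]
  ring

section RookGraph

variable (m : ℕ) (k : Fin m × Fin m → ZMod 2)

lemma rookAdj_apply_eq_add (e f : Fin m × Fin m) :
    rookAdj m e f = (if e.1 = f.1 then 1 else 0) + (if e.2 = f.2 then 1 else 0) := by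
  unfold rookAdj
  split_ifs <;> simp_all [Prod.ext_iff, CharTwo.add_self_eq_zero]

lemma sum_row_eq_degX (i : Fin m) : ∑ j, k (i, j) = (degX m k i : ZMod 2) :=
  sum_zmod_two_eq_card_filter _ _

lemma sum_col_eq_degY (j : Fin m) : ∑ i, k (i, j) = (degY m k j : ZMod 2) :=
  sum_zmod_two_eq_card_filter _ _

lemma rookAdj_mulVec_apply (e : Fin m × Fin m) :
    (rookAdj m).mulVec k e = (degX m k e.1 : ZMod 2) + (degY m k e.2 : ZMod 2) := by
  simp only [Matrix.mulVec, dotProduct, rookAdj_apply_eq_add, add_mul, ite_mul, one_mul,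
    zero_mul, sum_add_distrib, Fintype.sum_prod_type]
  rw [sum_comm (f := fun _ _ => ite _ _ _)]
  simp only [sum_ite_eq, mem_univ, if_true, sum_row_eq_degX, sum_col_eq_degY]

lemma rookAdj_mulVec_ne_zero_iff (e : Fin m × Fin m) :
    (rookAdj m).mulVec k e ≠ 0 ↔ Xor (Odd (degX m k e.1)) (Odd (degY m k e.2)) := by
  rw [rookAdj_mulVec_apply, ← Nat.cast_add, ZMod.natCast_ne_zero_iff_odd, Nat.odd_add,
    ← Nat.not_odd_iff_even, xor_iff_not_iff]
  tauto

lemma lX_le : lX m k ≤ m := (card_filter_le _ _).trans_eq (card_fin m)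

lemma lY_le : lY m k ≤ m := (card_filter_le _ _).trans_eq (card_fin m)

end RookGraph

/-- For the adjacency matrix `A'` of the line graph of `K_{m,m}` over
`ZMod 2` and any `k ∈ {0,1}^{E(K_{m,m})}`,
`wt(A'·k) = m(l_k^x + l_k^y) - 2 l_k^x l_k^y`, where `l_k^x`, `l_k^y` count the
odd-degree vertices of the subgraph `(K_{m,m})_k` in the parts `X`, `Y`. -/
theorem stmt15 (m : ℕ) (k : Fin m × Fin m → ZMod 2) :
    wt ((rookAdj m).mulVec k) = m * (lX m k + lY m k) - 2 * (lX m k * lY m k) := by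
  have hwt : wt ((rookAdj m).mulVec k) =
      #{e ∈ univ ×ˢ univ | Xor (Odd (degX m k e.1)) (Odd (degY m k e.2))} := by
    simp only [wt, univ_product_univ, rookAdj_mulVec_ne_zero_iff]
  rw [hwt, card_filter_xor_product _ _ (fun i => Odd (degX m k i)) (fun j => Odd (degY m k j)),
    card_univ, Fintype.card_fin]
  exact Nat.mul_tsub_add_tsub_mul (lX_le m k) (lY_le m k)
end

section
/- Let A' be the adjacency matrix of the line graph of K_{m,m} over Z_2 and k ∈ {0,1}^{m²}. If wt((A'·k) ∨ k) < m, then every vertex of the subgraph (K_{m,m})_k has even degree. -/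
open Finset

lemma zmod2_ne_zero {x : ZMod 2} (h : x = 1) : x ≠ 0 := by subst h; decide

lemma odd_cast {n : ℕ} (h : Odd n) : (n : ZMod 2) = 1 := by
  obtain ⟨c, rfl⟩ := h; push_cast; simp [show (2:ZMod 2)=0 by decide]

lemma even_cast {n : ℕ} (h : Even n) : (n : ZMod 2) = 0 := by
  obtain ⟨c, rfl⟩ := h; push_cast; rw [← two_mul]; simp [show (2:ZMod 2)=0 by decide]

lemma rookAdj_eq (m : ℕ) (e f : Fin m × Fin m) :
    rookAdj m e f = (if f.1 = e.1 then 1 else 0) + (if f.2 = e.2 then 1 else 0) := by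
  unfold rookAdj
  rcases e with ⟨a,b⟩; rcases f with ⟨c,d⟩
  by_cases h1 : c = a <;> by_cases h2 : d = b <;> (simp_all [Prod.ext_iff, eq_comm]; try decide)

lemma mulVec_eq (m : ℕ) (k : Fin m × Fin m → ZMod 2) (i j : Fin m) :
    (rookAdj m).mulVec k (i, j) = (degX m k i : ZMod 2) + (degY m k j : ZMod 2) := by
  unfold Matrix.mulVec dotProduct
  simp only [rookAdj_eq, add_mul, ite_mul, one_mul, zero_mul, Finset.sum_add_distrib]
  rw [Fintype.sum_prod_type, Fintype.sum_prod_type]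
  have h1 : ∀ n : ZMod 2, n = if n = 1 then (1:ZMod 2) else 0 := by decide
  have : (∑ a : Fin m, ∑ b : Fin m, if a = i then k (a,b) else 0)
      = (degX m k i : ZMod 2) := by
    rw [Finset.sum_eq_single i]
    · simp only [if_pos rfl, degX]
      rw [← Finset.sum_boole]
      exact Finset.sum_congr rfl fun b _ => h1 _
    · intro a _ ha; simp [ha]
    · simp
  rw [this]
  have : (∑ a : Fin m, ∑ b : Fin m, if b = j then k (a,b) else 0)
      = (degY m k j : ZMod 2) := by
    rw [Finset.sum_comm, Finset.sum_eq_single j]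
    · simp only [if_pos rfl, degY]
      rw [← Finset.sum_boole]
      exact Finset.sum_congr rfl fun a _ => h1 _
    · intro b _ hb; simp [hb]
    · simp
  rw [this]

/-- For the adjacency matrix `A'` of the line graph of `K_{m,m}` over
`ZMod 2` and `k ∈ {0,1}^{m²}`, if `wt((A'·k) ∨ k) < m` then every vertex of the
subgraph `(K_{m,m})_k` has even degree. -/
theorem stmt16 (m : ℕ) (k : Fin m × Fin m → ZMod 2)
    (h : wtOr ((rookAdj m).mulVec k) k < m) :
    (∀ i, Even (degX m k i)) ∧ (∀ j, Even (degY m k j)) := by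
  by_contra hcon
  have hodd : (∃ i, Odd (degX m k i)) ∨ (∃ j, Odd (degY m k j)) := by
    rw [not_and_or] at hcon
    rcases hcon with hc | hc <;> push_neg at hc
    · exact Or.inl (by simpa [Nat.not_even_iff_odd] using hc)
    · exact Or.inr (by simpa [Nat.not_even_iff_odd] using hc)
  set S := univ.filter fun e : Fin m × Fin m =>
      (rookAdj m).mulVec k e ≠ 0 ∨ k e ≠ 0 with hS
  have key : m ≤ S.card := by
    rcases hodd with ⟨i0, hi0⟩ | ⟨j0, hj0⟩
    · have hg : ∀ j : Fin m, ∃ e ∈ S, e.2 = j := by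
        intro j
        by_cases hj : Odd (degY m k j)
        · have hne : (univ.filter fun i => k (i, j) = 1).Nonempty := by
            rw [← Finset.card_pos]; exact hj.pos
          obtain ⟨i', hi'⟩ := hne
          refine ⟨(i', j), ?_, rfl⟩
          simp only [hS, mem_filter, mem_univ, true_and]
          exact Or.inr (zmod2_ne_zero (Finset.mem_filter.mp hi').2)
        · refine ⟨(i0, j), ?_, rfl⟩
          simp only [hS, mem_filter, mem_univ, true_and]
          left
          rw [mulVec_eq, odd_cast hi0, even_cast (Nat.not_odd_iff_even.mp hj)]
          decide
      choose g hgS hg2 using hg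
      calc m = (univ : Finset (Fin m)).card := by simp
        _ ≤ S.card := Finset.card_le_card_of_injOn g (fun j _ => hgS j)
            (fun a _ b _ hab => by rw [← hg2 a, ← hg2 b, hab])
    · have hg : ∀ i : Fin m, ∃ e ∈ S, e.1 = i := by
        intro i
        by_cases hi : Odd (degX m k i)
        · have hne : (univ.filter fun j => k (i, j) = 1).Nonempty := by
            rw [← Finset.card_pos]; exact hi.pos
          obtain ⟨j', hj'⟩ := hne
          refine ⟨(i, j'), ?_, rfl⟩
          simp only [hS, mem_filter, mem_univ, true_and]
          exact Or.inr (zmod2_ne_zero (Finset.mem_filter.mp hj').2)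
        · refine ⟨(i, j0), ?_, rfl⟩
          simp only [hS, mem_filter, mem_univ, true_and]
          left
          rw [mulVec_eq, odd_cast hj0, even_cast (Nat.not_odd_iff_even.mp hi)]
          decide
      choose g hgS hg1 using hg
      calc m = (univ : Finset (Fin m)).card := by simp
        _ ≤ S.card := Finset.card_le_card_of_injOn g (fun i _ => hgS i)
            (fun a _ b _ hab => by rw [← hg1 a, ← hg1 b, hab])
  have : m ≤ wtOr ((rookAdj m).mulVec k) k := key
  omega
end
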